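/- Let n, k ≥ 1 and 1 ≤ m ≤ n, and for 1 ≤ i ≤ ⌊n/m⌋ set D_i = {(i−1)m+1, …, im}^{k+1} ⊆ [n]^{k+1}. Let S ⊆ {1, …, ⌊n/m⌋} with |S| < n. Then the fraction of A ∈ L_n^k such that for every i ∈ S there exists α ∈ D_i with A(α) = 1 is at most (m^{k+1}/(n−|S|))^{|S|}. -/

import Mathlib

open scoped Classical

/-- `A : [n]^{k+1} → {0,1}` is an order-`n` `k`-dimensional permutation if every
line (obtained by fixing all coordinates but one) contains exactly one `1`. -/
def IsHDPerm (n k : ℕ) (A : (Fin (k + 1) → Fin n) → Bool) : Prop :=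
  ∀ (j : Fin (k + 1)) (x : Fin (k + 1) → Fin n),
    ∃! t : Fin n, A (Function.update x j t) = true

/-- `L_n^k`: the finite set of order-`n` `k`-dimensional permutations. -/
noncomputable def HDPerms (n k : ℕ) : Finset ((Fin (k + 1) → Fin n) → Bool) :=
  Finset.univ.filter (fun A => IsHDPerm n k A)

/-- A monotone subsequence of length `m` in `A`: a sequence of `m` support
positions that is strictly monotone (in some direction) in every coordinate. -/
def IsMonoSub (n k m : ℕ) (A : (Fin (k + 1) → Fin n) → Bool)
    (α : Fin m → (Fin (k + 1) → Fin n)) : Prop :=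
  (∀ i, A (α i) = true) ∧
    ∀ j : Fin (k + 1), StrictMono (fun i => α i j) ∨ StrictAnti (fun i => α i j)

/-- `H(A)`: the maximum length of a monotone subsequence of `A`. -/
noncomputable def HLen (n k : ℕ) (A : (Fin (k + 1) → Fin n) → Bool) : ℕ :=
  sSup {m : ℕ | ∃ α : Fin m → (Fin (k + 1) → Fin n), IsMonoSub n k m A α}

/-- The strict partial order `<_c` on `[n]^{k+1}` induced by `c ∈ {0,1}^{k+1}`. -/
def cLT {n k : ℕ} (c : Fin (k + 1) → Bool) (x y : Fin (k + 1) → Fin n) : Prop :=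
  ∀ i, if c i then x i < y i else y i < x i

/-- A `<_c`-monotone subsequence of length `m` in `A`: a `<_c`-chain of `m`
support positions. -/
def IsCMonoSub (n k m : ℕ) (c : Fin (k + 1) → Bool)
    (A : (Fin (k + 1) → Fin n) → Bool) (α : Fin m → (Fin (k + 1) → Fin n)) : Prop :=
  (∀ i, A (α i) = true) ∧ ∀ i j : Fin m, i < j → cLT c (α i) (α j)

open Finset

/-- the `i`-th diagonal block of `[n]` (0-indexed values). -/
def Blk (n m i : ℕ) : Finset (Fin n) :=
  Finset.univ.filter (fun a : Fin n => (i - 1) * m ≤ a.val ∧ a.val < i * m)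

lemma Blk_card {n m i : ℕ} (hi : 1 ≤ i) : (Blk n m i).card ≤ m := by
  have h : (Blk n m i).card ≤ (Finset.Ico ((i - 1) * m) (i * m)).card := by
    apply Finset.card_le_card_of_injOn (fun a => a.val)
    · intro a ha
      simp only [Finset.mem_coe, Blk, Finset.mem_filter] at ha
      exact Finset.mem_Ico.mpr ha.2
    · exact Fin.val_injective.injOn
  rw [Nat.card_Ico] at h
  have h2 : i * m = (i - 1) * m + m := by
    have h3 : i = (i - 1) + 1 := by omega
    calc i * m = ((i - 1) + 1) * m := by rw [← h3]
      _ = (i - 1) * m + m := by ring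
  omega

lemma Blk_disj {n m i j : ℕ} (hij : i ≠ j) (hi : 1 ≤ i) (hj : 1 ≤ j)
    {a : Fin n} (hai : a ∈ Blk n m i) (haj : a ∈ Blk n m j) : False := by
  simp only [Blk, Finset.mem_filter, Finset.mem_univ, true_and] at hai haj
  rcases Nat.lt_or_ge i j with h | h
  · have : i * m ≤ (j - 1) * m := Nat.mul_le_mul_right m (by omega)
    omega
  · have : j * m ≤ (i - 1) * m := Nat.mul_le_mul_right m (by omega)
    omega

/-- the set of 0-th coordinates of support points of `A` whose remaining
coordinates lie in block `i`. -/
def Tfin (n k m : ℕ) (A : (Fin (k + 1) → Fin n) → Bool) (i : ℕ) : Finset (Fin n) :=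
  (Finset.univ.filter (fun x : Fin (k + 1) → Fin n =>
      A x = true ∧ ∀ j : Fin (k + 1), j ≠ 0 → x j ∈ Blk n m i)).image (fun x => x 0)

lemma Tfin_card {n k m : ℕ} {A : (Fin (k + 1) → Fin n) → Bool}
    (hA : IsHDPerm n k A) {i : ℕ} (hi : 1 ≤ i) :
    (Tfin n k m A i).card ≤ m ^ k := by
  have h1 : (Tfin n k m A i).card ≤ (Finset.univ.filter (fun x : Fin (k + 1) → Fin n =>
      A x = true ∧ ∀ j : Fin (k + 1), j ≠ 0 → x j ∈ Blk n m i)).card :=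
    Finset.card_image_le
  have h2 : (Finset.univ.filter (fun x : Fin (k + 1) → Fin n =>
      A x = true ∧ ∀ j : Fin (k + 1), j ≠ 0 → x j ∈ Blk n m i)).card
      ≤ (Fintype.piFinset (fun _ : Fin k => Blk n m i)).card := by
    apply Finset.card_le_card_of_injOn (fun x => fun j : Fin k => x j.succ)
    · intro x hx
      simp only [Finset.mem_coe, Finset.mem_filter, Finset.mem_univ, true_and] at hx
      rw [Finset.mem_coe, Fintype.mem_piFinset]
      intro j
      exact hx.2 j.succ (Fin.succ_ne_zero j)
    · intro x hx y hy hxy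
      simp only [Finset.coe_filter, Set.mem_setOf_eq, Finset.mem_univ, true_and] at hx hy
      -- x and y agree off coordinate 0
      have hoff : ∀ j : Fin (k + 1), j ≠ 0 → x j = y j := by
        intro j hj
        have := congrFun hxy (j.pred hj)
        simpa [Fin.succ_pred] using this
      have hyx : y = Function.update x 0 (y 0) := by
        funext j
        by_cases hj : j = 0
        · subst hj; rw [Function.update_self]
        · rw [Function.update_of_ne hj, hoff j hj]
      have hxx : x = Function.update x 0 (x 0) := by
        rw [Function.update_eq_self]
      obtain ⟨u, -, huniq⟩ := hA 0 x
      have e1 : x 0 = u := huniq (x 0) (show A (Function.update x 0 (x 0)) = true by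
        rw [Function.update_eq_self]; exact hx.1)
      have e2 : y 0 = u := huniq (y 0) (show A (Function.update x 0 (y 0)) = true by
        rw [← hyx]; exact hy.1)
      funext j
      by_cases hj : j = 0
      · subst hj; rw [e1, e2]
      · exact hoff j hj
  have h3 : (Fintype.piFinset (fun _ : Fin k => Blk n m i)).card ≤ m ^ k := by
    rw [Fintype.card_piFinset]
    refine le_trans (Finset.prod_le_pow_card _ _ m (fun _ _ => Blk_card hi)) ?_
    rw [Finset.card_univ, Fintype.card_fin]
  exact le_trans h1 (le_trans h2 h3)

variable {n k : ℕ}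

/-- action of `Equiv.Perm (Fin n)` on arrays, relabeling coordinate 0. -/
def act (σ : Equiv.Perm (Fin n)) (A : (Fin (k + 1) → Fin n) → Bool) :
    (Fin (k + 1) → Fin n) → Bool :=
  fun x => A (Function.update x 0 (σ⁻¹ (x 0)))

lemma act_act (σ τ : Equiv.Perm (Fin n)) (A : (Fin (k + 1) → Fin n) → Bool) :
    act σ (act τ A) = act (σ * τ) A := by
  funext x
  simp [act, Function.update_idem, Function.update_self]

lemma act_one (A : (Fin (k + 1) → Fin n) → Bool) : act (1 : Equiv.Perm (Fin n)) A = A := by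
  funext x
  simp [act, Function.update_eq_self]

lemma act_inv_act (σ : Equiv.Perm (Fin n)) (A : (Fin (k + 1) → Fin n) → Bool) :
    act σ⁻¹ (act σ A) = A := by
  rw [act_act, inv_mul_cancel, act_one]

lemma act_act_inv (σ : Equiv.Perm (Fin n)) (A : (Fin (k + 1) → Fin n) → Bool) :
    act σ (act σ⁻¹ A) = A := by
  rw [act_act, mul_inv_cancel, act_one]

lemma isHDPerm_act (σ : Equiv.Perm (Fin n)) {A : (Fin (k + 1) → Fin n) → Bool}
    (hA : IsHDPerm n k A) : IsHDPerm n k (act σ A) := by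
  intro j x
  by_cases hj : j = 0
  · subst hj
    obtain ⟨u, hu, huniq⟩ := hA 0 x
    refine ⟨σ u, ?_, ?_⟩
    · simp [act, Function.update_idem, Function.update_self, hu]
    · intro t ht
      simp only [act, Function.update_idem, Function.update_self] at ht
      have h1 := huniq _ ht
      have h2 : t = σ (σ⁻¹ t) := by simp
      rw [h2, h1]
  · obtain ⟨u, hu, huniq⟩ := hA j (Function.update x 0 (σ⁻¹ (x 0)))
    have key : ∀ t : Fin n, act σ A (Function.update x j t)
        = A (Function.update (Function.update x 0 (σ⁻¹ (x 0))) j t) := by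
      intro t
      show A (Function.update (Function.update x j t) 0
          (σ⁻¹ (Function.update x j t 0))) = _
      have h0 : Function.update x j t 0 = x 0 :=
        Function.update_of_ne (Ne.symm hj) _ _
      rw [h0, Function.update_comm (Ne.symm hj)]
    refine ⟨u, ?_, fun t ht => ?_⟩
    · show act σ A (Function.update x j u) = true
      rw [key]; exact hu
    · have ht' : act σ A (Function.update x j t) = true := ht
      rw [key] at ht'
      exact huniq t ht'

lemma mem_HDPerms_act (σ : Equiv.Perm (Fin n)) {A : (Fin (k + 1) → Fin n) → Bool}
    (hA : A ∈ HDPerms n k) : act σ A ∈ HDPerms n k := by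
  simp only [HDPerms, mem_filter, mem_univ, true_and] at *
  exact isHDPerm_act σ hA

/-- for fixed σ, A ↦ act σ A gives equal filtered counts -/
lemma card_filter_act (σ : Equiv.Perm (Fin n)) (P : ((Fin (k + 1) → Fin n) → Bool) → Prop) :
    ((HDPerms n k).filter (fun A => P (act σ A))).card
      = ((HDPerms n k).filter (fun A => P A)).card := by
  apply Finset.card_bij' (i := fun A _ => act σ A) (j := fun A _ => act σ⁻¹ A)
  · intro A hA
    simp only [mem_filter] at hA ⊢
    exact ⟨mem_HDPerms_act σ hA.1, hA.2⟩
  · intro A hA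
    simp only [mem_filter] at hA ⊢
    refine ⟨mem_HDPerms_act σ⁻¹ hA.1, ?_⟩
    rw [act_act_inv]
    exact hA.2
  · intro A _; exact act_inv_act σ A
  · intro A _; exact act_act_inv σ A

/-- The number of permutations of `Fin n` with `s` prescribed (injective) values
is at most `(n-s)!`. -/
lemma perm_fix_card {n s : ℕ} (hsn : s < n) {ι : Type} [Fintype ι]
    (hι : Fintype.card ι = s)
    (t b : ι → Fin n) (ht : Function.Injective t) (hb : Function.Injective b) :
    ((Finset.univ : Finset (Equiv.Perm (Fin n))).filter
        (fun σ => ∀ i, σ (t i) = b i)).card ≤ (n - s).factorial := by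
  set Tset : Finset (Fin n) := Finset.univ.image t with hT
  set Bset : Finset (Fin n) := Finset.univ.image b with hB
  have hTcard : Tset.card = s := by
    rw [hT, Finset.card_image_of_injective _ ht, Finset.card_univ, hι]
  have hBcard : Bset.card = s := by
    rw [hB, Finset.card_image_of_injective _ hb, Finset.card_univ, hι]
  have hTc : Tsetᶜ.card = n - s := by
    rw [Finset.card_compl, hTcard, Fintype.card_fin]
  have hBc : Bsetᶜ.card = n - s := by
    rw [Finset.card_compl, hBcard, Fintype.card_fin]
  have hne : Nonempty ↥(Bsetᶜ) := by
    have h0 : 0 < Bsetᶜ.card := by omega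
    exact Finset.Nonempty.coe_sort (Finset.card_pos.mp h0)
  set G := (Finset.univ : Finset (Equiv.Perm (Fin n))).filter
      (fun σ => ∀ i, σ (t i) = b i) with hG
  have hmem_filter : ∀ σ, σ ∈ G ↔ ∀ i, σ (t i) = b i := by
    intro σ; simp [hG]
  have hmap : ∀ σ ∈ G, ∀ u : Fin n, u ∈ Tsetᶜ → σ u ∈ Bsetᶜ := by
    intro σ hσ u hu
    rw [hmem_filter] at hσ
    simp only [Finset.mem_compl] at hu ⊢
    intro hmem
    rw [hB, Finset.mem_image] at hmem
    obtain ⟨i, -, hi⟩ := hmem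
    have h1 : σ u = σ (t i) := by rw [hσ i, hi]
    have h2 : u = t i := σ.injective h1
    exact hu (by rw [hT, Finset.mem_image]; exact ⟨i, Finset.mem_univ i, h2.symm⟩)
  set E : Equiv.Perm (Fin n) → (↥(Tsetᶜ) → ↥(Bsetᶜ)) :=
    fun σ u => if h : σ u.1 ∈ Bsetᶜ then ⟨σ u.1, h⟩ else Classical.arbitrary _ with hE
  have hEval : ∀ σ ∈ G, ∀ u : ↥(Tsetᶜ), (E σ u).1 = σ u.1 := by
    intro σ hσ u
    simp only [hE]
    rw [dif_pos (hmap σ hσ u.1 u.2)]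
  have hEinj : ∀ σ ∈ G, Function.Injective (E σ) := by
    intro σ hσ u v huv
    have : σ u.1 = σ v.1 := by
      rw [← hEval σ hσ u, ← hEval σ hσ v, huv]
    exact Subtype.ext (σ.injective this)
  set T2 : Finset (↥(Tsetᶜ) → ↥(Bsetᶜ)) :=
    Finset.univ.image (fun e : ↥(Tsetᶜ) ↪ ↥(Bsetᶜ) => (e : ↥(Tsetᶜ) → ↥(Bsetᶜ)))
    with hT2
  have hcard : G.card ≤ T2.card := by
    apply Finset.card_le_card_of_injOn E
    · intro σ hσ
      rw [hT2, Finset.mem_coe, Finset.mem_image]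
      exact ⟨⟨E σ, hEinj σ hσ⟩, Finset.mem_univ _, rfl⟩
    · intro σ hσ σ' hσ' heq
      rw [Finset.mem_coe, hmem_filter] at hσ hσ'
      apply Equiv.ext
      intro a
      by_cases ha : a ∈ Tset
      · rw [hT, Finset.mem_image] at ha
        obtain ⟨i, -, hi⟩ := ha
        rw [← hi, hσ i, hσ' i]
      · have ha' : a ∈ Tsetᶜ := Finset.mem_compl.mpr ha
        have := congrFun heq ⟨a, ha'⟩
        have h1 := hEval σ (by rw [hmem_filter]; exact hσ) ⟨a, ha'⟩
        have h2 := hEval σ' (by rw [hmem_filter]; exact hσ') ⟨a, ha'⟩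
        rw [← h1, ← h2, this]
  have hT2card : T2.card = (n - s).factorial := by
    rw [hT2, Finset.card_image_of_injective _ DFunLike.coe_injective,
      Finset.card_univ, Fintype.card_embedding_eq, Fintype.card_coe,
      Fintype.card_coe, hTc, hBc, Nat.descFactorial_self]
  omega

lemma sigma_bound {n k m : ℕ} (hn : 1 ≤ n) {S : Finset ℕ}
    (hS1 : ∀ i ∈ S, 1 ≤ i) (hScard : S.card < n)
    {A : (Fin (k + 1) → Fin n) → Bool} (hA : IsHDPerm n k A) :
    ((Finset.univ : Finset (Equiv.Perm (Fin n))).filter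
        (fun σ => ∀ i ∈ S, ∃ x : Fin (k + 1) → Fin n, A x = true ∧
          (∀ j : Fin (k + 1), j ≠ 0 → x j ∈ Blk n m i) ∧ σ (x 0) ∈ Blk n m i)).card
      ≤ (m ^ (k + 1)) ^ S.card * (n - S.card).factorial := by
  classical
  set G := (Finset.univ : Finset (Equiv.Perm (Fin n))).filter
      (fun σ => ∀ i ∈ S, ∃ x : Fin (k + 1) → Fin n, A x = true ∧
        (∀ j : Fin (k + 1), j ≠ 0 → x j ∈ Blk n m i) ∧ σ (x 0) ∈ Blk n m i) with hG
  set z : Fin n := ⟨0, hn⟩ with hz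
  set Φ : Equiv.Perm (Fin n) → (∀ i ∈ S, Fin n × Fin n) :=
    fun σ => fun i _ => if h : ∃ x : Fin (k + 1) → Fin n, A x = true ∧
        (∀ j : Fin (k + 1), j ≠ 0 → x j ∈ Blk n m i) ∧ σ (x 0) ∈ Blk n m i
      then (h.choose 0, σ (h.choose 0)) else (z, z) with hΦ
  set W : Finset (∀ i ∈ S, Fin n × Fin n) :=
    S.pi (fun i => (Tfin n k m A i) ×ˢ (Blk n m i)) with hW
  have hΦW : ∀ σ ∈ G, Φ σ ∈ W := by
    intro σ hσ
    rw [hG, Finset.mem_filter] at hσ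
    rw [hW, Finset.mem_pi]
    intro i hi
    have h := hσ.2 i hi
    simp only [hΦ]
    rw [dif_pos h]
    obtain ⟨h1, h2, h3⟩ := h.choose_spec
    rw [Finset.mem_product]
    constructor
    · rw [Tfin, Finset.mem_image]
      exact ⟨h.choose, Finset.mem_filter.mpr ⟨Finset.mem_univ _, h1, h2⟩, rfl⟩
    · exact h3
  have hsum := Finset.card_eq_sum_card_fiberwise hΦW
  have hfiber : ∀ w ∈ W, (G.filter (fun σ => Φ σ = w)).card
      ≤ (n - S.card).factorial := by
    intro w hw
    rcases Finset.eq_empty_or_nonempty (G.filter (fun σ => Φ σ = w)) with he | ⟨σ0, hσ0⟩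
    · rw [he, Finset.card_empty]; exact Nat.zero_le _
    · set t : ↥S → Fin n := fun i => (w i.1 i.2).1 with htdef
      set b : ↥S → Fin n := fun i => (w i.1 i.2).2 with hbdef
      rw [hW, Finset.mem_pi] at hw
      have hbB : ∀ i : ↥S, b i ∈ Blk n m i.1 := by
        intro i
        have := hw i.1 i.2
        rw [Finset.mem_product] at this
        exact this.2
      have hσtb : ∀ σ ∈ G.filter (fun σ => Φ σ = w), ∀ i : ↥S, σ (t i) = b i := by
        intro σ hσ i
        rw [Finset.mem_filter] at hσ
        obtain ⟨hσG, hσw⟩ := hσ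
        rw [hG, Finset.mem_filter] at hσG
        have h := hσG.2 i.1 i.2
        have heval : Φ σ i.1 i.2 = (h.choose 0, σ (h.choose 0)) := by
          simp only [hΦ]; rw [dif_pos h]
        have hwi : w i.1 i.2 = (h.choose 0, σ (h.choose 0)) := by
          rw [← hσw]; exact heval
        show σ (w i.1 i.2).1 = (w i.1 i.2).2
        rw [hwi]
      -- injectivity of t and b
      have hσ0tb := hσtb σ0 hσ0
      have hS1' : ∀ i : ↥S, 1 ≤ i.1 := fun i => hS1 i.1 i.2
      have hbinj : Function.Injective b := by
        intro i j hij
        by_contra hne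
        have hij' : i.1 ≠ j.1 := fun h => hne (Subtype.ext h)
        exact Blk_disj hij' (hS1' i) (hS1' j) (hbB i) (hij ▸ hbB j)
      have htinj : Function.Injective t := by
        intro i j hij
        apply hbinj
        rw [← hσ0tb i, ← hσ0tb j, hij]
      have hsub : G.filter (fun σ => Φ σ = w) ⊆
          (Finset.univ : Finset (Equiv.Perm (Fin n))).filter
            (fun σ => ∀ i : ↥S, σ (t i) = b i) := by
        intro σ hσ
        rw [Finset.mem_filter]
        exact ⟨Finset.mem_univ _, hσtb σ hσ⟩
      calc (G.filter (fun σ => Φ σ = w)).card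
          ≤ ((Finset.univ : Finset (Equiv.Perm (Fin n))).filter
              (fun σ => ∀ i : ↥S, σ (t i) = b i)).card := Finset.card_le_card hsub
        _ ≤ (n - S.card).factorial :=
            perm_fix_card hScard (Fintype.card_coe S) t b htinj hbinj
  have hWcard : W.card ≤ (m ^ (k + 1)) ^ S.card := by
    rw [hW, Finset.card_pi]
    apply Finset.prod_le_pow_card
    intro i hi
    rw [Finset.card_product]
    calc (Tfin n k m A i).card * (Blk n m i).card ≤ m ^ k * m :=
        Nat.mul_le_mul (Tfin_card hA (hS1 i hi)) (Blk_card (hS1 i hi))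
      _ = m ^ (k + 1) := (pow_succ m k).symm
  calc G.card = ∑ w ∈ W, (G.filter (fun σ => Φ σ = w)).card := hsum
    _ ≤ ∑ _w ∈ W, (n - S.card).factorial := Finset.sum_le_sum hfiber
    _ = W.card * (n - S.card).factorial := by rw [Finset.sum_const, smul_eq_mul]
    _ ≤ (m ^ (k + 1)) ^ S.card * (n - S.card).factorial :=
        Nat.mul_le_mul_right _ hWcard
lemma act_pred {n k m : ℕ} (σ : Equiv.Perm (Fin n))
    (A : (Fin (k + 1) → Fin n) → Bool) (i : ℕ) :
    (∃ α : Fin (k + 1) → Fin n,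
        (∀ j, (i - 1) * m ≤ (α j : ℕ) ∧ (α j : ℕ) < i * m) ∧ act σ A α = true)
    ↔ (∃ x : Fin (k + 1) → Fin n, A x = true ∧
        (∀ j : Fin (k + 1), j ≠ 0 → x j ∈ Blk n m i) ∧ σ (x 0) ∈ Blk n m i) := by
  have hblk : ∀ a : Fin n, a ∈ Blk n m i ↔ ((i - 1) * m ≤ (a : ℕ) ∧ (a : ℕ) < i * m) := by
    intro a; simp [Blk]
  constructor
  · rintro ⟨α, hb, hact⟩
    refine ⟨Function.update α 0 (σ⁻¹ (α 0)), hact, ?_, ?_⟩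
    · intro j hj
      rw [Function.update_of_ne hj, hblk]
      exact hb j
    · rw [Function.update_self]
      simp only [Equiv.Perm.coe_inv, Equiv.apply_symm_apply]
      rw [hblk]
      exact hb 0
  · rintro ⟨x, hAx, hoff, h0⟩
    refine ⟨Function.update x 0 (σ (x 0)), ?_, ?_⟩
    · intro j
      by_cases hj : j = 0
      · subst hj
        rw [Function.update_self, ← hblk]
        exact h0
      · rw [Function.update_of_ne hj, ← hblk]
        exact hoff j hj
    · show A (Function.update (Function.update x 0 (σ (x 0))) 0
        (σ⁻¹ (Function.update x 0 (σ (x 0)) 0))) = true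
      rw [Function.update_self, Function.update_idem]
      simp only [Equiv.Perm.coe_inv, Equiv.symm_apply_apply]
      rw [Function.update_eq_self]
      exact hAx

/-- For diagonal subcubes `D_i = {(i-1)m+1, …, im}^{k+1}` and `S` a set of
indices with `|S| < n`, the fraction of `A ∈ L_n^k` whose support meets `D_i`
for every `i ∈ S` is at most `(m^{k+1}/(n-|S|))^{|S|}`. -/
theorem multiplicative_prob (n k m : ℕ) (hn : 1 ≤ n) (hk : 1 ≤ k)
    (hm1 : 1 ≤ m) (hmn : m ≤ n) (S : Finset ℕ) (hS : S ⊆ Finset.Icc 1 (n / m))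
    (hScard : S.card < n) :
    (((HDPerms n k).filter (fun A => ∀ i ∈ S, ∃ α : Fin (k + 1) → Fin n,
        (∀ j, (i - 1) * m ≤ (α j : ℕ) ∧ (α j : ℕ) < i * m) ∧ A α = true)).card : ℝ)
      / ((HDPerms n k).card : ℝ)
      ≤ ((m : ℝ) ^ (k + 1) / ((n : ℝ) - (S.card : ℝ))) ^ (S.card) := by
  classical
  set s := S.card with hs
  set P : ((Fin (k + 1) → Fin n) → Bool) → Prop := fun A => ∀ i ∈ S,
    ∃ α : Fin (k + 1) → Fin n,
      (∀ j, (i - 1) * m ≤ (α j : ℕ) ∧ (α j : ℕ) < i * m) ∧ A α = true with hP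
  set L := HDPerms n k with hL
  set good := L.filter P with hgood
  have hS1 : ∀ i ∈ S, 1 ≤ i := fun i hi => (Finset.mem_Icc.mp (hS hi)).1
  -- counting identity
  have hid : good.card * n.factorial
      = ∑ A ∈ L, ((Finset.univ : Finset (Equiv.Perm (Fin n))).filter
          (fun σ => P (act σ A))).card := by
    have step1 : ∀ A, ((Finset.univ : Finset (Equiv.Perm (Fin n))).filter
        (fun σ => P (act σ A))).card
        = ∑ σ : Equiv.Perm (Fin n), if P (act σ A) then 1 else 0 := by
      intro A; rw [Finset.card_filter]
    have step2 : ∀ σ : Equiv.Perm (Fin n),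
        (∑ A ∈ L, if P (act σ A) then 1 else 0) = good.card := by
      intro σ
      rw [← Finset.card_filter, hgood, hL]
      convert card_filter_act σ P using 2 <;> congr!
    calc good.card * n.factorial = n.factorial * good.card := Nat.mul_comm _ _
      _ = ∑ _σ : Equiv.Perm (Fin n), good.card := by
          rw [Finset.sum_const, Finset.card_univ, Fintype.card_perm,
            Fintype.card_fin, smul_eq_mul]
      _ = ∑ σ : Equiv.Perm (Fin n), ∑ A ∈ L, if P (act σ A) then 1 else 0 := by
          apply Finset.sum_congr rfl; intro σ _; rw [step2]
      _ = ∑ A ∈ L, ∑ σ : Equiv.Perm (Fin n), if P (act σ A) then 1 else 0 :=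
          Finset.sum_comm
      _ = ∑ A ∈ L, ((Finset.univ : Finset (Equiv.Perm (Fin n))).filter
          (fun σ => P (act σ A))).card := by
          apply Finset.sum_congr rfl; intro A _; rw [step1]
  -- per-A bound
  have hperA : ∀ A ∈ L, ((Finset.univ : Finset (Equiv.Perm (Fin n))).filter
      (fun σ => P (act σ A))).card ≤ (m ^ (k + 1)) ^ s * (n - s).factorial := by
    intro A hAL
    have hA : IsHDPerm n k A := by
      rw [hL, HDPerms, Finset.mem_filter] at hAL; exact hAL.2
    have heq : ∀ σ : Equiv.Perm (Fin n), P (act σ A) ↔ ∀ i ∈ S,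
        ∃ x : Fin (k + 1) → Fin n, A x = true ∧
          (∀ j : Fin (k + 1), j ≠ 0 → x j ∈ Blk n m i) ∧ σ (x 0) ∈ Blk n m i := by
      intro σ
      rw [hP]
      constructor
      · intro h i hi; exact (act_pred σ A i).mp (h i hi)
      · intro h i hi; exact (act_pred σ A i).mpr (h i hi)
    have : ((Finset.univ : Finset (Equiv.Perm (Fin n))).filter
        (fun σ => P (act σ A)))
        = ((Finset.univ : Finset (Equiv.Perm (Fin n))).filter
          (fun σ => ∀ i ∈ S, ∃ x : Fin (k + 1) → Fin n, A x = true ∧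
            (∀ j : Fin (k + 1), j ≠ 0 → x j ∈ Blk n m i) ∧ σ (x 0) ∈ Blk n m i)) := by
      apply Finset.filter_congr
      intro σ _
      exact heq σ
    rw [this]
    exact sigma_bound hn hS1 hScard hA
  -- combined nat inequality
  have hmain : good.card * n.factorial
      ≤ L.card * ((m ^ (k + 1)) ^ s * (n - s).factorial) := by
    rw [hid]
    calc (∑ A ∈ L, ((Finset.univ : Finset (Equiv.Perm (Fin n))).filter
          (fun σ => P (act σ A))).card)
        ≤ ∑ _A ∈ L, (m ^ (k + 1)) ^ s * (n - s).factorial :=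
          Finset.sum_le_sum hperA
      _ = L.card * ((m ^ (k + 1)) ^ s * (n - s).factorial) := by
          rw [Finset.sum_const, smul_eq_mul]
  -- real arithmetic
  have hsn : s ≤ n := Nat.le_of_lt hScard
  have hnspos : 0 < n - s := Nat.sub_pos_of_lt hScard
  have hcast : ((n : ℝ) - (s : ℝ)) = ((n - s : ℕ) : ℝ) := by
    rw [Nat.cast_sub hsn]
  have hfact : ((n - s : ℕ) : ℝ) ^ s * ((n - s).factorial : ℝ) ≤ (n.factorial : ℝ) := by
    have hnat : (n - s) ^ s * (n - s).factorial ≤ n.factorial := by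
      calc (n - s) ^ s * (n - s).factorial
          ≤ n.descFactorial s * (n - s).factorial := by
            apply Nat.mul_le_mul_right
            calc (n - s) ^ s ≤ (n + 1 - s) ^ s := Nat.pow_le_pow_left (by omega) s
              _ ≤ n.descFactorial s := Nat.pow_sub_le_descFactorial n s
        _ = n.factorial := by
            rw [Nat.mul_comm]
            exact Nat.factorial_mul_descFactorial hsn
    exact_mod_cast hnat
  by_cases hLz : L.card = 0
  · have hgz : good.card = 0 :=
      Nat.eq_zero_of_le_zero (le_trans (Finset.card_filter_le _ _) (Nat.le_of_eq hLz))
    rw [hgz, hLz]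
    norm_num
    apply pow_nonneg
    apply div_nonneg (by positivity)
    rw [hcast]
    positivity
  · have hLpos : (0 : ℝ) < (L.card : ℝ) := by
      have : 0 < L.card := Nat.pos_of_ne_zero hLz
      exact_mod_cast this
    have hnfpos : (0 : ℝ) < (n.factorial : ℝ) := by
      exact_mod_cast n.factorial_pos
    have hdpos : (0 : ℝ) < ((n - s : ℕ) : ℝ) := by exact_mod_cast hnspos
    have hmainR : (good.card : ℝ) * (n.factorial : ℝ)
        ≤ (L.card : ℝ) * (((m : ℝ) ^ (k + 1)) ^ s * ((n - s).factorial : ℝ)) := by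
      have := hmain
      exact_mod_cast this
    rw [div_le_iff₀ hLpos, hcast, div_pow]
    rw [div_mul_eq_mul_div, le_div_iff₀ (by positivity)]
    -- goal : good * ((n-s)^s) ≤ M^s * L
    have h1 : (good.card : ℝ) * ((n - s : ℕ) : ℝ) ^ s * (n.factorial : ℝ)
        ≤ ((m : ℝ) ^ (k + 1)) ^ s * (L.card : ℝ) * (n.factorial : ℝ) := by
      calc (good.card : ℝ) * ((n - s : ℕ) : ℝ) ^ s * (n.factorial : ℝ)
          = (good.card : ℝ) * (n.factorial : ℝ) * ((n - s : ℕ) : ℝ) ^ s := by ring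
        _ ≤ (L.card : ℝ) * (((m : ℝ) ^ (k + 1)) ^ s * ((n - s).factorial : ℝ))
              * ((n - s : ℕ) : ℝ) ^ s := by
            apply mul_le_mul_of_nonneg_right hmainR (by positivity)
        _ = (L.card : ℝ) * ((m : ℝ) ^ (k + 1)) ^ s
              * (((n - s : ℕ) : ℝ) ^ s * ((n - s).factorial : ℝ)) := by ring
        _ ≤ (L.card : ℝ) * ((m : ℝ) ^ (k + 1)) ^ s * (n.factorial : ℝ) := by
            apply mul_le_mul_of_nonneg_left hfact (by positivity)
        _ = ((m : ℝ) ^ (k + 1)) ^ s * (L.card : ℝ) * (n.factorial : ℝ) := by ring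
    have := le_of_mul_le_mul_right (by linarith [h1] : (good.card : ℝ) * ((n - s : ℕ) : ℝ) ^ s * (n.factorial : ℝ) ≤ ((m : ℝ) ^ (k + 1)) ^ s * (L.card : ℝ) * (n.factorial : ℝ)) hnfpos
    linarith [this]
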